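/- Let (A ♯_σ^× H, β ⊗ α) be a Radford [(m,k),m]-biproduct monoidal Hom-bialgebra with σ convolution invertible. Define φ^l: H ⊗ (A ⊗ H) → A ⊗ H by φ^l(l ⊗ (a ⊗ h)) = (α(l₁₁)·β⁻¹(a)) σ(α^{k+2−m}(l₁₂), α^{k+1}(h₁)) ⊗ α^{1−m}(l₂)α(h₂), and σ̄: H ⊗ H → A ⊗ H by σ̄(h ⊗ l) = σ(α^{k+1−m}(h), α^{k+1−m}(l)) ⊗ 1_H. Then (A ♯_σ^× H, β ⊗ α, φ^l) is a left (H, α, σ̄)-Hom module: φ^l(α(g) ⊗ φ^l(l ⊗ x)) = (β ⊗ α)(σ̄(g₁, l₁)) · φ^l(g₂l₂ ⊗ x) and φ^l(1_H ⊗ x) = (β ⊗ α)(x) for all g, l ∈ H and x ∈ A ⊗ H. -/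

import Mathlib

/-!
The action is left multiplication in the biproduct: `φ^l(l, x) = (1 ♯ α^{-m}(l)) x`. Both axioms
then follow from the Hom-associativity of `A ♯_σ^× H` together with the two products
`(1 ♯ h)(1 ♯ g) = Σ β²σ(α^k h₁, α^k g₁) ♯ α(h₂g₂)` and `(a ♯ 1)(1 ♯ g) = β(a) ♯ α(g)`, both
consequences of `h·1 = ε(h)1`. Matching the two sides requires trading a power of `β` on the
values of `σ` for a power of `α` on its arguments, and this comes from the multiplicativity of
`β ⊗ α` on the biproduct.
-/

open TensorProduct

noncomputable section

/-- A monoidal Hom-algebra `(A, β)`. -/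
structure HomAlgebraStr (K : Type*) (A : Type*) [Field K] [AddCommGroup A] [Module K A] where
  mul : A →ₗ[K] A →ₗ[K] A
  one : A
  str : A ≃ₗ[K] A
  hom_assoc : ∀ a b c : A, mul (str a) (mul b c) = mul (mul a b) (str c)
  str_mul : ∀ a b : A, str (mul a b) = mul (str a) (str b)
  mul_one : ∀ a : A, mul a one = str a
  one_mul : ∀ a : A, mul one a = str a
  str_one : str one = one

/-- A monoidal Hom-coalgebra `(C, γ)`. -/
structure HomCoalgebraStr (K : Type*) (C : Type*) [Field K] [AddCommGroup C] [Module K C] where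
  comul : C →ₗ[K] C ⊗[K] C
  counit : C →ₗ[K] K
  str : C ≃ₗ[K] C
  hom_coassoc : ∀ c : C,
    TensorProduct.map str.symm.toLinearMap comul (comul c)
      = TensorProduct.assoc K C C C (TensorProduct.map comul str.symm.toLinearMap (comul c))
  comul_str : ∀ c : C, comul (str c) = TensorProduct.map str.toLinearMap str.toLinearMap (comul c)
  counit_comul_left : ∀ c : C,
    TensorProduct.lid K C (TensorProduct.map counit (LinearMap.id : C →ₗ[K] C) (comul c)) = str.symm c
  counit_comul_right : ∀ c : C,
    TensorProduct.rid K C (TensorProduct.map (LinearMap.id : C →ₗ[K] C) counit (comul c)) = str.symm c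
  counit_str : ∀ c : C, counit (str c) = counit c

/-- The componentwise multiplication on `N ⊗ N` induced by a bilinear multiplication on `N`. -/
def tensorSquareMul {K N : Type*} [Field K] [AddCommGroup N] [Module K N]
    (mul : N →ₗ[K] N →ₗ[K] N) :
    (N ⊗[K] N) →ₗ[K] (N ⊗[K] N) →ₗ[K] (N ⊗[K] N) :=
  TensorProduct.curry
    ((TensorProduct.map (TensorProduct.lift mul) (TensorProduct.lift mul)) ∘ₗ
      (TensorProduct.tensorTensorTensorComm K N N N N).toLinearMap)

/-- A monoidal Hom-bialgebra `(H, α)`. -/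
structure HomBialgebraStr (K : Type*) (H : Type*) [Field K] [AddCommGroup H] [Module K H]
    extends HomAlgebraStr K H where
  comul : H →ₗ[K] H ⊗[K] H
  counit : H →ₗ[K] K
  hom_coassoc : ∀ c : H,
    TensorProduct.map str.symm.toLinearMap comul (comul c)
      = TensorProduct.assoc K H H H (TensorProduct.map comul str.symm.toLinearMap (comul c))
  comul_str : ∀ c : H, comul (str c) = TensorProduct.map str.toLinearMap str.toLinearMap (comul c)
  counit_comul_left : ∀ c : H,
    TensorProduct.lid K H (TensorProduct.map counit (LinearMap.id : H →ₗ[K] H) (comul c)) = str.symm c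
  counit_comul_right : ∀ c : H,
    TensorProduct.rid K H (TensorProduct.map (LinearMap.id : H →ₗ[K] H) counit (comul c)) = str.symm c
  counit_str : ∀ c : H, counit (str c) = counit c
  comul_mul : ∀ a b : H, comul (mul a b) = tensorSquareMul mul (comul a) (comul b)
  comul_one : comul one = one ⊗ₜ[K] one
  counit_mul : ∀ a b : H, counit (mul a b) = counit a * counit b
  counit_one : counit one = 1

/-- A monoidal Hom-Hopf algebra `(H, α, S)`. -/
structure HomHopfStr (K : Type*) (H : Type*) [Field K] [AddCommGroup H] [Module K H]
    extends HomBialgebraStr K H where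
  antipode : H →ₗ[K] H
  antipode_str : ∀ h : H, antipode (str h) = str (antipode h)
  antipode_mul_left : ∀ h : H,
    TensorProduct.lift (mul ∘ₗ antipode) (comul h) = counit h • one
  antipode_mul_right : ∀ h : H,
    TensorProduct.lift (mul.compl₂ antipode) (comul h) = counit h • one

section Defs

variable {K H A C M : Type*} [Field K]
variable [AddCommGroup H] [Module K H] [AddCommGroup A] [Module K A]
variable [AddCommGroup C] [Module K C] [AddCommGroup M] [Module K M]

/-- `(A, β)` is a left weak `(H, α)`-Hom-module algebra via `act`:
`h·(ab) = (h₁·a)(h₂·b)` and `h·1 = ε(h)1`. -/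
structure IsWeakModuleAlgebra (HB : HomBialgebraStr K H) (AA : HomAlgebraStr K A)
    (act : H →ₗ[K] A →ₗ[K] A) : Prop where
  act_mul : ∀ (h : H) (a b : A),
    act h (AA.mul a b)
      = TensorProduct.lift AA.mul
          (TensorProduct.map (TensorProduct.lift act) (TensorProduct.lift act)
            (TensorProduct.map ((TensorProduct.mk K H A).flip a) ((TensorProduct.mk K H A).flip b)
              (HB.comul h)))
  act_one : ∀ h : H, act h AA.one = HB.counit h • AA.one

/-- `(C, β)` is a left `(H, α)`-Hom-comodule coalgebra via `coact a = a₍₋₁₎ ⊗ a₍₀₎`. -/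
structure IsComoduleCoalgebra (HB : HomBialgebraStr K H) (CC : HomCoalgebraStr K C)
    (coact : C →ₗ[K] H ⊗[K] C) : Prop where
  comodule_coassoc : ∀ c : C,
    TensorProduct.assoc K H H C
        (TensorProduct.map HB.comul CC.str.symm.toLinearMap (coact c))
      = TensorProduct.map HB.str.symm.toLinearMap coact (coact c)
  coact_str : ∀ c : C,
    coact (CC.str c) = TensorProduct.map HB.str.toLinearMap CC.str.toLinearMap (coact c)
  counit_coact : ∀ c : C,
    TensorProduct.lid K C (TensorProduct.map HB.counit (LinearMap.id : C →ₗ[K] C) (coact c))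
      = CC.str.symm c
  coact_comul : ∀ c : C,
    TensorProduct.map (LinearMap.id : H →ₗ[K] H) CC.comul (coact c)
      = TensorProduct.map (TensorProduct.lift HB.mul) (LinearMap.id : C ⊗[K] C →ₗ[K] C ⊗[K] C)
          (TensorProduct.tensorTensorTensorComm K H C H C
            (TensorProduct.map coact coact (CC.comul c)))
  counit_coact_one : ∀ c : C,
    TensorProduct.rid K H (TensorProduct.map (LinearMap.id : H →ₗ[K] H) CC.counit (coact c))
      = CC.counit c • HB.one

/-- The `(m,k)`-Hom-crossed product multiplication on simple tensors:
`(a ♯ h)(b ♯ g) = a[(α^m(h₁₁)·β⁻²(b)) σ(α^{k+1}(h₁₂), α^k(g₁))] ♯ α(h₂g₂)`. -/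
def cpMulElem (HB : HomBialgebraStr K H) (AA : HomAlgebraStr K A)
    (act : H →ₗ[K] A →ₗ[K] A) (σ : H →ₗ[K] H →ₗ[K] A) (m k : ℤ)
    (a : A) (h : H) (b : A) (g : H) : A ⊗[K] H :=
  TensorProduct.map
    ((AA.mul a) ∘ₗ TensorProduct.lift AA.mul ∘ₗ
      TensorProduct.map
        ((act.flip ((AA.str ^ (-2 : ℤ)) b)) ∘ₗ (HB.str ^ m).toLinearMap)
        (TensorProduct.lift σ ∘ₗ
          TensorProduct.map (HB.str ^ (k+1)).toLinearMap (HB.str ^ k).toLinearMap) ∘ₗ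
      (TensorProduct.assoc K H H H).toLinearMap)
    (HB.str.toLinearMap ∘ₗ TensorProduct.lift HB.mul)
    (TensorProduct.map (TensorProduct.map HB.comul (LinearMap.id : H →ₗ[K] H))
      (LinearMap.id : H ⊗[K] H →ₗ[K] H ⊗[K] H)
      (TensorProduct.tensorTensorTensorComm K H H H H (HB.comul h ⊗ₜ[K] HB.comul g)))

/-- The `m`-Hom-smash product multiplication on simple tensors:
`(a ♯ h)(b ♯ g) = a(α^m(h₁)·β⁻¹(b)) ♯ α(h₂)g`. -/
def smashMulElem (HB : HomBialgebraStr K H) (AA : HomAlgebraStr K A)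
    (act : H →ₗ[K] A →ₗ[K] A) (m : ℤ) (a : A) (h : H) (b : A) (g : H) : A ⊗[K] H :=
  TensorProduct.map
    ((AA.mul a) ∘ₗ (act.flip ((AA.str ^ (-1 : ℤ)) b)) ∘ₗ (HB.str ^ m).toLinearMap)
    ((HB.mul.flip g) ∘ₗ HB.str.toLinearMap)
    (HB.comul h)

/-- The `m`-Hom-smash coproduct comultiplication on simple tensors:
`Δ(a ⋊ h) = (a₁ ⋊ α^m(a₂₍₋₁₎)α⁻¹(h₁)) ⊗ (β(a₂₍₀₎) ⋊ h₂)`. -/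
def scComulElem (HB : HomBialgebraStr K H) (AC : HomCoalgebraStr K A)
    (coact : A →ₗ[K] H ⊗[K] A) (m : ℤ) (a : A) (h : H) :
    (A ⊗[K] H) ⊗[K] (A ⊗[K] H) :=
  TensorProduct.map
    (TensorProduct.map (LinearMap.id : A →ₗ[K] A)
        (TensorProduct.lift HB.mul ∘ₗ
          TensorProduct.map (HB.str ^ m).toLinearMap (HB.str ^ (-1 : ℤ)).toLinearMap) ∘ₗ
      (TensorProduct.assoc K A H H).toLinearMap)
    (TensorProduct.map AC.str.toLinearMap (LinearMap.id : H →ₗ[K] H))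
    (TensorProduct.tensorTensorTensorComm K (A ⊗[K] H) A H H
      ((TensorProduct.assoc K A H A).symm
          (TensorProduct.map (LinearMap.id : A →ₗ[K] A) coact (AC.comul a)) ⊗ₜ[K] HB.comul h))

/-- Condition (1) of Theorem 2.3. -/
def CPCond1 (HB : HomBialgebraStr K H) (AA : HomAlgebraStr K A)
    (σ : H →ₗ[K] H →ₗ[K] A) : Prop :=
  (∀ h : H, σ h HB.one = HB.counit h • AA.one) ∧
  (∀ h : H, σ HB.one h = HB.counit h • AA.one) ∧
  (∀ h g : H, σ (HB.str h) (HB.str g) = AA.str (σ h g))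

/-- Condition (2) of Theorem 2.3:
`[α^m(h₁l₁)·a] σ(α^{k+2}(h₂), α^{k+2}(l₂)) = σ(α^{k+2}(h₁), α^{k+2}(l₁)) [α^m(h₂l₂)·a]`. -/
def CPCond2 (HB : HomBialgebraStr K H) (AA : HomAlgebraStr K A)
    (act : H →ₗ[K] A →ₗ[K] A) (σ : H →ₗ[K] H →ₗ[K] A) (m k : ℤ) : Prop :=
  ∀ (h l : H) (a : A),
    TensorProduct.lift AA.mul
      (TensorProduct.map
        ((act.flip a) ∘ₗ (HB.str ^ m).toLinearMap ∘ₗ TensorProduct.lift HB.mul)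
        (TensorProduct.lift σ ∘ₗ
          TensorProduct.map (HB.str ^ (k+2)).toLinearMap (HB.str ^ (k+2)).toLinearMap)
        (TensorProduct.tensorTensorTensorComm K H H H H (HB.comul h ⊗ₜ[K] HB.comul l)))
    =
    TensorProduct.lift AA.mul
      (TensorProduct.map
        (TensorProduct.lift σ ∘ₗ
          TensorProduct.map (HB.str ^ (k+2)).toLinearMap (HB.str ^ (k+2)).toLinearMap)
        ((act.flip a) ∘ₗ (HB.str ^ m).toLinearMap ∘ₗ TensorProduct.lift HB.mul)
        (TensorProduct.tensorTensorTensorComm K H H H H (HB.comul h ⊗ₜ[K] HB.comul l)))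

/-- Condition (3) of Theorem 2.3:
`[α^{m+1}(h₁)·σ(α^{k+1}(l₁), α^{k+1}(g₁))] σ(α^{k+2}(h₂), α^{k+1}(l₂g₂))
  = σ(α^{k+2}(h₁), α^{k+2}(l₁)) σ(α^{k+1}(h₂l₂), α^{k+1}(g))`. -/
def CPCond3 (HB : HomBialgebraStr K H) (AA : HomAlgebraStr K A)
    (act : H →ₗ[K] A →ₗ[K] A) (σ : H →ₗ[K] H →ₗ[K] A) (m k : ℤ) : Prop :=
  ∀ h l g : H,
    TensorProduct.lift AA.mul
      (TensorProduct.map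
        (TensorProduct.lift act ∘ₗ
          TensorProduct.map (HB.str ^ (m+1)).toLinearMap
            (TensorProduct.lift σ ∘ₗ
              TensorProduct.map (HB.str ^ (k+1)).toLinearMap (HB.str ^ (k+1)).toLinearMap))
        (TensorProduct.lift σ ∘ₗ
          TensorProduct.map (HB.str ^ (k+2)).toLinearMap
            ((HB.str ^ (k+1)).toLinearMap ∘ₗ TensorProduct.lift HB.mul))
        (TensorProduct.tensorTensorTensorComm K H H (H ⊗[K] H) (H ⊗[K] H)
          (HB.comul h ⊗ₜ[K]
            (TensorProduct.tensorTensorTensorComm K H H H H (HB.comul l ⊗ₜ[K] HB.comul g)))))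
    =
    TensorProduct.lift AA.mul
      (TensorProduct.map
        (TensorProduct.lift σ ∘ₗ
          TensorProduct.map (HB.str ^ (k+2)).toLinearMap (HB.str ^ (k+2)).toLinearMap)
        ((σ.flip ((HB.str ^ (k+1)) g)) ∘ₗ (HB.str ^ (k+1)).toLinearMap ∘ₗ TensorProduct.lift HB.mul)
        (TensorProduct.tensorTensorTensorComm K H H H H (HB.comul h ⊗ₜ[K] HB.comul l)))

/-- `σ` is a twisted comodule cocycle:
`β(a₁) ⊗ α^{m+1}(a₂₍₋₁₎)g ⊗ a₂₍₀₎
  = a₁σ(α^{k+m+2}(a₂₍₋₁₎₁), α^{k+1}(g₁)) ⊗ α^{m+2}(a₂₍₋₁₎₂)α(g₂) ⊗ a₂₍₀₎`. -/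
def IsTwistedCocycle (HB : HomBialgebraStr K H) (AA : HomAlgebraStr K A)
    (AC : HomCoalgebraStr K A) (coact : A →ₗ[K] H ⊗[K] A)
    (σ : H →ₗ[K] H →ₗ[K] A) (m k : ℤ) : Prop :=
  ∀ (a : A) (g : H),
    (TensorProduct.assoc K A H A).symm
      (TensorProduct.map AA.str.toLinearMap
        (TensorProduct.map ((HB.mul.flip g) ∘ₗ (HB.str ^ (m+1)).toLinearMap)
          (LinearMap.id : A →ₗ[K] A))
        (TensorProduct.map (LinearMap.id : A →ₗ[K] A) coact (AC.comul a)))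
    =
    TensorProduct.map
      (TensorProduct.map (TensorProduct.lift AA.mul) (LinearMap.id : H →ₗ[K] H)
        ∘ₗ (TensorProduct.assoc K A A H).symm.toLinearMap
        ∘ₗ TensorProduct.map (LinearMap.id : A →ₗ[K] A)
            (TensorProduct.map
              (TensorProduct.lift σ ∘ₗ
                TensorProduct.map (HB.str ^ (k+m+2)).toLinearMap (HB.str ^ (k+1)).toLinearMap)
              (TensorProduct.lift HB.mul ∘ₗ
                TensorProduct.map (HB.str ^ (m+2)).toLinearMap HB.str.toLinearMap)
            ∘ₗ (TensorProduct.tensorTensorTensorComm K H H H H).toLinearMap)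
        ∘ₗ (TensorProduct.assoc K A (H ⊗[K] H) (H ⊗[K] H)).toLinearMap)
      (LinearMap.id : A →ₗ[K] A)
      ((TensorProduct.assoc K (A ⊗[K] (H ⊗[K] H)) (H ⊗[K] H) A).symm
        (TensorProduct.map (LinearMap.id : A ⊗[K] (H ⊗[K] H) →ₗ[K] A ⊗[K] (H ⊗[K] H))
          (TensorProduct.comm K A (H ⊗[K] H)).toLinearMap
          (TensorProduct.assoc K (A ⊗[K] (H ⊗[K] H)) A (H ⊗[K] H)
            ((TensorProduct.assoc K A (H ⊗[K] H) A).symm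
                (TensorProduct.map (LinearMap.id : A →ₗ[K] A)
                  (TensorProduct.map HB.comul (LinearMap.id : A →ₗ[K] A))
                  (TensorProduct.map (LinearMap.id : A →ₗ[K] A) coact (AC.comul a)))
              ⊗ₜ[K] HB.comul g))))

/-- Auxiliary map `(n ⊗ w) ⊗ t ↦ (α^j(n)·t) ⊗ f(w)` on `(H ⊗ M) ⊗ H`. -/
def coactMulAux (HB : HomBialgebraStr K H) (j : ℤ) (f : M →ₗ[K] M) :
    (H ⊗[K] M) ⊗[K] H →ₗ[K] H ⊗[K] M :=
  TensorProduct.map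
      (TensorProduct.lift HB.mul ∘ₗ
        TensorProduct.map (HB.str ^ j).toLinearMap (LinearMap.id : H →ₗ[K] H)) f
    ∘ₗ (TensorProduct.assoc K H H M).symm.toLinearMap
    ∘ₗ TensorProduct.map (LinearMap.id : H →ₗ[K] H) (TensorProduct.comm K M H).toLinearMap
    ∘ₗ (TensorProduct.assoc K H M H).toLinearMap

/-- (A1): `ε_A` is an algebra map. -/
def CondA1 (AA : HomAlgebraStr K A) (AC : HomCoalgebraStr K A) : Prop :=
  (∀ a b : A, AC.counit (AA.mul a b) = AC.counit a * AC.counit b) ∧ AC.counit AA.one = 1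

/-- (A2): `ε_A(h·a) = ε_H(h)ε_A(a)`. -/
def CondA2 (HB : HomBialgebraStr K H) (AC : HomCoalgebraStr K A)
    (act : H →ₗ[K] A →ₗ[K] A) : Prop :=
  ∀ (h : H) (a : A), AC.counit (act h a) = HB.counit h * AC.counit a

/-- (A3): `σ` is a coalgebra map. -/
def CondA3 (HB : HomBialgebraStr K H) (AC : HomCoalgebraStr K A)
    (σ : H →ₗ[K] H →ₗ[K] A) : Prop :=
  (∀ h g : H,
    AC.comul (σ h g)
      = TensorProduct.map (TensorProduct.lift σ) (TensorProduct.lift σ)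
          (TensorProduct.tensorTensorTensorComm K H H H H (HB.comul h ⊗ₜ[K] HB.comul g))) ∧
  (∀ h g : H, AC.counit (σ h g) = HB.counit h * HB.counit g)

/-- (A4): `Δ_A(1_A) = 1_A ⊗ 1_A`. -/
def CondA4 (AA : HomAlgebraStr K A) (AC : HomCoalgebraStr K A) : Prop :=
  AC.comul AA.one = AA.one ⊗ₜ[K] AA.one

/-- (A5): the coaction is an algebra map. -/
def CondA5 (HB : HomBialgebraStr K H) (AA : HomAlgebraStr K A)
    (coact : A →ₗ[K] H ⊗[K] A) : Prop :=
  (∀ a b : A,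
    coact (AA.mul a b)
      = TensorProduct.map (TensorProduct.lift HB.mul) (TensorProduct.lift AA.mul)
          (TensorProduct.tensorTensorTensorComm K H A H A (coact a ⊗ₜ[K] coact b))) ∧
  coact AA.one = HB.one ⊗ₜ[K] AA.one

/-- (A6). -/
def CondA6 (HB : HomBialgebraStr K H) (coact : A →ₗ[K] H ⊗[K] A)
    (σ : H →ₗ[K] H →ₗ[K] A) (m k : ℤ) : Prop :=
  ∀ h g : H,
    coactMulAux HB (m-1) (LinearMap.id : A →ₗ[K] A)
      (TensorProduct.map
        (coact ∘ₗ TensorProduct.lift σ ∘ₗ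
          TensorProduct.map (HB.str ^ (k+2)).toLinearMap (HB.str ^ (k+2)).toLinearMap)
        ((HB.str ^ (-1 : ℤ)).toLinearMap ∘ₗ TensorProduct.lift HB.mul)
        (TensorProduct.tensorTensorTensorComm K H H H H (HB.comul h ⊗ₜ[K] HB.comul g)))
    =
    TensorProduct.map (TensorProduct.lift HB.mul)
      (TensorProduct.lift σ ∘ₗ
        TensorProduct.map (HB.str ^ (k+1)).toLinearMap (HB.str ^ (k+1)).toLinearMap)
      (TensorProduct.tensorTensorTensorComm K H H H H (HB.comul h ⊗ₜ[K] HB.comul g))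

/-- (A7). -/
def CondA7 (HB : HomBialgebraStr K H) (AA : HomAlgebraStr K A) (AC : HomCoalgebraStr K A)
    (act : H →ₗ[K] A →ₗ[K] A) (coact : A →ₗ[K] H ⊗[K] A)
    (σ : H →ₗ[K] H →ₗ[K] A) (m k : ℤ) : Prop :=
  ∀ a b : A,
    AC.comul (AA.mul a b) =
      TensorProduct.map
        (TensorProduct.lift AA.mul
          ∘ₗ TensorProduct.map (LinearMap.id : A →ₗ[K] A)
              (TensorProduct.lift AA.mul
                ∘ₗ TensorProduct.map
                    (TensorProduct.lift act ∘ₗ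
                      TensorProduct.map (HB.str ^ (2*m)).toLinearMap (AA.str ^ (-2 : ℤ)).toLinearMap)
                    (TensorProduct.lift σ ∘ₗ
                      TensorProduct.map (HB.str ^ (k+m+1)).toLinearMap (HB.str ^ (k+m)).toLinearMap)
                ∘ₗ (TensorProduct.tensorTensorTensorComm K H H A H).toLinearMap)
          ∘ₗ (TensorProduct.assoc K A (H ⊗[K] H) (A ⊗[K] H)).toLinearMap)
        (AA.str.toLinearMap ∘ₗ TensorProduct.lift AA.mul)
        (TensorProduct.tensorTensorTensorComm K (A ⊗[K] (H ⊗[K] H)) A (A ⊗[K] H) A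
          ((TensorProduct.assoc K A (H ⊗[K] H) A).symm
              (TensorProduct.map (LinearMap.id : A →ₗ[K] A)
                (TensorProduct.map HB.comul (LinearMap.id : A →ₗ[K] A))
                (TensorProduct.map (LinearMap.id : A →ₗ[K] A) coact (AC.comul a)))
            ⊗ₜ[K]
            (TensorProduct.assoc K A H A).symm
              (TensorProduct.map (LinearMap.id : A →ₗ[K] A) coact (AC.comul b))))

/-- (A8). -/
def CondA8 (HB : HomBialgebraStr K H) (AA : HomAlgebraStr K A) (AC : HomCoalgebraStr K A)
    (act : H →ₗ[K] A →ₗ[K] A) (coact : A →ₗ[K] H ⊗[K] A)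
    (σ : H →ₗ[K] H →ₗ[K] A) (m k : ℤ) : Prop :=
  ∀ (h : H) (b : A),
    AC.comul (act ((HB.str ^ m) h) b) =
      TensorProduct.map
        (TensorProduct.lift AA.mul
          ∘ₗ TensorProduct.map
              (TensorProduct.lift act ∘ₗ
                TensorProduct.map (HB.str ^ m).toLinearMap (AA.str ^ (-1 : ℤ)).toLinearMap)
              (TensorProduct.lift σ ∘ₗ
                TensorProduct.map (HB.str ^ (k+1)).toLinearMap (HB.str ^ (k+m+1)).toLinearMap)
          ∘ₗ (TensorProduct.tensorTensorTensorComm K H H A H).toLinearMap)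
        (TensorProduct.lift act ∘ₗ
          TensorProduct.map (HB.str ^ m).toLinearMap AA.str.toLinearMap)
        (TensorProduct.tensorTensorTensorComm K (H ⊗[K] H) H (A ⊗[K] H) A
          (TensorProduct.map HB.comul (LinearMap.id : H →ₗ[K] H) (HB.comul h)
            ⊗ₜ[K]
            (TensorProduct.assoc K A H A).symm
              (TensorProduct.map (LinearMap.id : A →ₗ[K] A) coact (AC.comul b))))

/-- (A9). -/
def CondA9 (HB : HomBialgebraStr K H) (act : H →ₗ[K] A →ₗ[K] A)
    (coact : A →ₗ[K] H ⊗[K] A) (m : ℤ) : Prop :=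
  ∀ (h : H) (b : A),
    coactMulAux HB (m-1) (LinearMap.id : A →ₗ[K] A)
      (TensorProduct.map (coact ∘ₗ (act.flip b) ∘ₗ (HB.str ^ (m+1)).toLinearMap)
        (LinearMap.id : H →ₗ[K] H) (HB.comul h))
    =
    TensorProduct.map
      (TensorProduct.lift HB.mul ∘ₗ
        TensorProduct.map (LinearMap.id : H →ₗ[K] H) (HB.str ^ m).toLinearMap)
      (TensorProduct.lift act ∘ₗ
        TensorProduct.map (HB.str ^ m).toLinearMap (LinearMap.id : A →ₗ[K] A))
      (TensorProduct.tensorTensorTensorComm K H H H A (HB.comul h ⊗ₜ[K] coact b))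

/-- The Radford `[(m,k),m]`-biproduct structure on `A ⊗ H`. -/
structure IsRadfordBiproduct (HB : HomBialgebraStr K H) (AA : HomAlgebraStr K A)
    (AC : HomCoalgebraStr K A) (act : H →ₗ[K] A →ₗ[K] A) (coact : A →ₗ[K] H ⊗[K] A)
    (σ : H →ₗ[K] H →ₗ[K] A) (m k : ℤ) (B : HomBialgebraStr K (A ⊗[K] H)) : Prop where
  mul_def : ∀ (a : A) (h : H) (b : A) (g : H),
    B.mul (a ⊗ₜ[K] h) (b ⊗ₜ[K] g) = cpMulElem HB AA act σ m k a h b g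
  one_def : B.one = AA.one ⊗ₜ[K] HB.one
  comul_def : ∀ (a : A) (h : H), B.comul (a ⊗ₜ[K] h) = scComulElem HB AC coact m a h
  counit_def : ∀ (a : A) (h : H), B.counit (a ⊗ₜ[K] h) = AC.counit a * HB.counit h
  str_def : B.str = TensorProduct.congr AA.str HB.str

/-- `S_H` is a `σ`-antipode for `(H, α)`. -/
structure IsSigmaAntipode (HB : HomBialgebraStr K H) (AA : HomAlgebraStr K A)
    (σ : H →ₗ[K] H →ₗ[K] A) (S : H →ₗ[K] H) : Prop where
  antipode_str : ∀ h : H, S (HB.str h) = HB.str (S h)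
  right : ∀ h : H,
    TensorProduct.map (TensorProduct.lift σ) (TensorProduct.lift HB.mul)
        (TensorProduct.tensorTensorTensorComm K H H H H
          (TensorProduct.map HB.comul (HB.comul ∘ₗ S) (HB.comul h)))
      = HB.counit h • (AA.one ⊗ₜ[K] HB.one)
  left : ∀ h : H,
    TensorProduct.map (TensorProduct.lift σ) (TensorProduct.lift HB.mul)
        (TensorProduct.tensorTensorTensorComm K H H H H
          (TensorProduct.map (HB.comul ∘ₗ S) HB.comul (HB.comul h)))
      = HB.counit h • (AA.one ⊗ₜ[K] HB.one)

/-- `S_A` is a convolution inverse of `id_A`. -/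
def IsConvInvOfId (AA : HomAlgebraStr K A) (AC : HomCoalgebraStr K A)
    (SA : A →ₗ[K] A) : Prop :=
  (∀ a : A, TensorProduct.lift (AA.mul ∘ₗ SA) (AC.comul a) = AC.counit a • AA.one) ∧
  (∀ a : A, TensorProduct.lift (AA.mul.compl₂ SA) (AC.comul a) = AC.counit a • AA.one)

/-- `σ` and `σinv` are convolution inverses of each other. -/
def IsConvInvPair (HB : HomBialgebraStr K H) (AA : HomAlgebraStr K A)
    (σ σinv : H →ₗ[K] H →ₗ[K] A) : Prop :=
  (∀ h g : H,
    TensorProduct.lift AA.mul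
      (TensorProduct.map (TensorProduct.lift σ) (TensorProduct.lift σinv)
        (TensorProduct.tensorTensorTensorComm K H H H H (HB.comul h ⊗ₜ[K] HB.comul g)))
    = (HB.counit h * HB.counit g) • AA.one) ∧
  (∀ h g : H,
    TensorProduct.lift AA.mul
      (TensorProduct.map (TensorProduct.lift σinv) (TensorProduct.lift σ)
        (TensorProduct.tensorTensorTensorComm K H H H H (HB.comul h ⊗ₜ[K] HB.comul g)))
    = (HB.counit h * HB.counit g) • AA.one)

/-- The Radford antipode formula
`S(a ⊗ h) = (1_A ⊗ S_H(α^{m−1}(a₍₋₁₎)α⁻²(h)))·(S_A(a₍₀₎) ⊗ 1_H)`. -/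
def radfordAntipodeElem (HB : HomBialgebraStr K H) (AA : HomAlgebraStr K A)
    (coact : A →ₗ[K] H ⊗[K] A)
    (Bmul : (A ⊗[K] H) →ₗ[K] (A ⊗[K] H) →ₗ[K] (A ⊗[K] H))
    (SH : H →ₗ[K] H) (SA : A →ₗ[K] A) (m : ℤ) (a : A) (h : H) : A ⊗[K] H :=
  TensorProduct.lift Bmul
    (TensorProduct.map
      ((TensorProduct.mk K A H AA.one) ∘ₗ SH ∘ₗ (HB.mul.flip ((HB.str ^ (-2 : ℤ)) h)) ∘ₗ
        (HB.str ^ (m - 1)).toLinearMap)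
      (((TensorProduct.mk K A H).flip HB.one) ∘ₗ SA)
      (coact a))

/-- `φ^l(l ⊗ (a ⊗ h)) = (α(l₁₁)·β⁻¹(a)) σ(α^{k+2−m}(l₁₂), α^{k+1}(h₁)) ⊗ α^{1−m}(l₂)α(h₂)`. -/
def philElem (HB : HomBialgebraStr K H) (AA : HomAlgebraStr K A)
    (act : H →ₗ[K] A →ₗ[K] A) (σ : H →ₗ[K] H →ₗ[K] A) (m k : ℤ)
    (l : H) (a : A) (h : H) : A ⊗[K] H :=
  TensorProduct.map
    (TensorProduct.lift AA.mul ∘ₗ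
      TensorProduct.map ((act.flip ((AA.str ^ (-1 : ℤ)) a)) ∘ₗ HB.str.toLinearMap)
        (TensorProduct.lift σ ∘ₗ
          TensorProduct.map (HB.str ^ (k+2-m)).toLinearMap (HB.str ^ (k+1)).toLinearMap) ∘ₗ
      (TensorProduct.assoc K H H H).toLinearMap)
    (TensorProduct.lift HB.mul ∘ₗ
      TensorProduct.map (HB.str ^ (1-m)).toLinearMap HB.str.toLinearMap)
    (TensorProduct.map (TensorProduct.map HB.comul (LinearMap.id : H →ₗ[K] H))
      (LinearMap.id : H ⊗[K] H →ₗ[K] H ⊗[K] H)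
      (TensorProduct.tensorTensorTensorComm K H H H H (HB.comul l ⊗ₜ[K] HB.comul h)))

/-- `φ^r((a ⊗ h) ⊗ l) = a σ(α^{k+1}(h₁), α^{k+1−m}(l₁)) ⊗ α(h₂)α^{1−m}(l₂)`. -/
def phirElem (HB : HomBialgebraStr K H) (AA : HomAlgebraStr K A)
    (σ : H →ₗ[K] H →ₗ[K] A) (m k : ℤ) (a : A) (h : H) (l : H) : A ⊗[K] H :=
  TensorProduct.map
    ((AA.mul a) ∘ₗ TensorProduct.lift σ ∘ₗ
      TensorProduct.map (HB.str ^ (k+1)).toLinearMap (HB.str ^ (k+1-m)).toLinearMap)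
    (TensorProduct.lift HB.mul ∘ₗ
      TensorProduct.map HB.str.toLinearMap (HB.str ^ (1-m)).toLinearMap)
    (TensorProduct.tensorTensorTensorComm K H H H H (HB.comul h ⊗ₜ[K] HB.comul l))

/-- `(M, μ, φ)` is a left `(H, α, σ̄)`-Hom module. -/
def IsLeftSigmaHomModule (HB : HomBialgebraStr K H)
    (mulM : M →ₗ[K] M →ₗ[K] M) (strM : M →ₗ[K] M)
    (σbar : H →ₗ[K] H →ₗ[K] M) (φ : H →ₗ[K] M →ₗ[K] M) : Prop :=
  (∀ (g l : H) (x : M),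
    φ (HB.str g) (φ l x)
      = TensorProduct.lift mulM
          (TensorProduct.map (strM ∘ₗ TensorProduct.lift σbar)
            ((φ.flip x) ∘ₗ TensorProduct.lift HB.mul)
            (TensorProduct.tensorTensorTensorComm K H H H H (HB.comul g ⊗ₜ[K] HB.comul l))))
  ∧ (∀ x : M, φ HB.one x = strM x)

/-- `(M, μ, φ)` is a right `(H, α, σ̄)`-Hom module. -/
def IsRightSigmaHomModule (HB : HomBialgebraStr K H)
    (mulM : M →ₗ[K] M →ₗ[K] M) (strM : M →ₗ[K] M)
    (σbar : H →ₗ[K] H →ₗ[K] M) (φ : M →ₗ[K] H →ₗ[K] M) : Prop :=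
  (∀ (x : M) (l g : H),
    φ (φ x l) (HB.str g)
      = mulM (strM x)
          (TensorProduct.lift φ
            (TensorProduct.map (TensorProduct.lift σbar) (TensorProduct.lift HB.mul)
              (TensorProduct.tensorTensorTensorComm K H H H H (HB.comul l ⊗ₜ[K] HB.comul g)))))
  ∧ (∀ x : M, φ x HB.one = strM x)

/-- `(M, μ, φ⁺, φ⁻)` is a weak `(H, α)` Hom-bimodule. -/
def IsWeakHomBimodule (HB : HomBialgebraStr K H) (strM : M →ₗ[K] M)
    (φl : H →ₗ[K] M →ₗ[K] M) (φr : M →ₗ[K] H →ₗ[K] M) : Prop :=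
  (∀ x : M, φl HB.one x = strM x) ∧ (∀ x : M, φr x HB.one = strM x) ∧
  (∀ (h : H) (x : M) (g : H), φl (HB.str h) (φr x g) = φr (φl h x) (HB.str g))

/-- A weak `m`-Hom admissible mapping system `C ⇄ A ⇄ H`. -/
structure WeakAdmissibleSystem (HB : HomBialgebraStr K H)
    (CA : HomAlgebraStr K C) (CC : HomCoalgebraStr K C)
    (coact : C →ₗ[K] H ⊗[K] C) (m : ℤ) (AB : HomBialgebraStr K A)
    (j : C →ₗ[K] A) (p : A →ₗ[K] C) (i : H →ₗ[K] A) (π : A →ₗ[K] H) : Prop where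
  c_str_eq : CA.str = CC.str
  p_j : ∀ c : C, p (j c) = c
  pi_i : ∀ h : H, π (i h) = h
  pi_mul : ∀ a b : A, π (AB.mul a b) = HB.mul (π a) (π b)
  pi_one : π AB.one = HB.one
  pi_str : ∀ a : A, π (AB.str a) = HB.str (π a)
  pi_comul : ∀ a : A, TensorProduct.map π π (AB.comul a) = HB.comul (π a)
  pi_counit : ∀ a : A, HB.counit (π a) = AB.counit a
  i_one : i HB.one = AB.one
  i_str : ∀ h : H, i (HB.str h) = AB.str (i h)
  i_comul : ∀ h : H, TensorProduct.map i i (HB.comul h) = AB.comul (i h)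
  i_counit : ∀ h : H, AB.counit (i h) = HB.counit h
  p_str : ∀ a : A, p (AB.str a) = CC.str (p a)
  p_comul : ∀ a : A, TensorProduct.map p p (AB.comul a) = CC.comul (p a)
  p_counit : ∀ a : A, CC.counit (p a) = AB.counit a
  j_mul : ∀ c d : C, j (CA.mul c d) = AB.mul (j c) (j d)
  j_one : j CA.one = AB.one
  j_str : ∀ c : C, j (CC.str c) = AB.str (j c)
  p_left_act : ∀ (h : H) (a : A),
    p (AB.mul (i ((HB.str ^ (-m)) h)) a) = HB.counit h • CC.str (p a)
  p_right_act : ∀ (a : A) (h : H),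
    p (AB.mul a (i ((HB.str ^ (-m)) h))) = HB.counit h • CC.str (p a)
  sigma_mod : ∃ σbar : H →ₗ[K] H →ₗ[K] A,
    IsLeftSigmaHomModule HB AB.mul AB.str.toLinearMap σbar
        (AB.mul ∘ₗ i ∘ₗ (HB.str ^ (-m)).toLinearMap)
      ∧ IsRightSigmaHomModule HB AB.mul AB.str.toLinearMap σbar
        (AB.mul.compl₂ (i ∘ₗ (HB.str ^ (-m)).toLinearMap))
  sub_l : ∀ c : C, ∃ y : H ⊗[K] C,
    TensorProduct.map ((HB.str ^ (-m)).toLinearMap ∘ₗ π) (LinearMap.id : A →ₗ[K] A)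
        (AB.comul (j c))
      = TensorProduct.map (LinearMap.id : H →ₗ[K] H) j y
  sub_r : ∀ c : C, ∃ z : C ⊗[K] H,
    TensorProduct.map (LinearMap.id : A →ₗ[K] A) ((HB.str ^ (-m)).toLinearMap ∘ₗ π)
        (AB.comul (j c))
      = TensorProduct.map j (LinearMap.id : H →ₗ[K] H) z
  p_col : ∀ c : C,
    TensorProduct.map (LinearMap.id : H →ₗ[K] H) p
        (TensorProduct.map ((HB.str ^ (-m)).toLinearMap ∘ₗ π) (LinearMap.id : A →ₗ[K] A)
          (AB.comul (j c)))
      = coact c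
  p_cor : ∀ c : C,
    TensorProduct.map p (LinearMap.id : H →ₗ[K] H)
        (TensorProduct.map (LinearMap.id : A →ₗ[K] A) ((HB.str ^ (-m)).toLinearMap ∘ₗ π)
          (AB.comul (j c)))
      = CC.str.symm c ⊗ₜ[K] HB.one
  split : ∀ a : A,
    TensorProduct.lift AB.mul (TensorProduct.map (j ∘ₗ p) (i ∘ₗ π) (AB.comul a)) = a

/-- The map `f : C ♯ H → A`, `c ⊗ h ↦ γ⁻¹(j(c)i(h))`. -/
def admF (AB : HomBialgebraStr K A) (j : C →ₗ[K] A) (i : H →ₗ[K] A) :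
    C ⊗[K] H →ₗ[K] A :=
  AB.str.symm.toLinearMap ∘ₗ TensorProduct.lift ((AB.mul ∘ₗ j).compl₂ i)

/-- The map `g : A → C ♯ H`, `a ↦ β(p(a₁)) ⊗ α(π(a₂))`. -/
def admG (HB : HomBialgebraStr K H) (CC : HomCoalgebraStr K C)
    (AB : HomBialgebraStr K A) (p : A →ₗ[K] C) (π : A →ₗ[K] H) :
    A →ₗ[K] C ⊗[K] H :=
  TensorProduct.map (CC.str.toLinearMap ∘ₗ p) (HB.str.toLinearMap ∘ₗ π) ∘ₗ AB.comul

end Defs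

namespace LinearEquiv

variable {R M N : Type*} [Semiring R] [AddCommMonoid M] [Module R M] [AddCommMonoid N]
  [Module R N]

theorem zpow_zpow_apply (e : M ≃ₗ[R] M) (a b : ℤ) (x : M) :
    (e ^ a) ((e ^ b) x) = (e ^ (a + b)) x := by
  rw [zpow_add, mul_apply]

theorem zpow_apply_apply (e : M ≃ₗ[R] M) (n : ℤ) (x : M) :
    (e ^ n) (e x) = (e ^ (n + 1)) x := by
  rw [zpow_add_one, mul_apply]

theorem apply_zpow_apply (e : M ≃ₗ[R] M) (n : ℤ) (x : M) :
    e ((e ^ n) x) = (e ^ (1 + n)) x := by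
  rw [zpow_one_add, mul_apply]

theorem zpow_symm_apply (e : M ≃ₗ[R] M) (n : ℤ) (x : M) :
    (e ^ n) (e.symm x) = (e ^ (n - 1)) x := by
  rw [← coe_inv, ← mul_apply, ← zpow_sub_one]

theorem zpow_apply_eq_self {e : M ≃ₗ[R] M} {x : M} (hx : e x = x) (n : ℤ) : (e ^ n) x = x :=
  Subgroup.zpow_mem (MulAction.stabilizer (M ≃ₗ[R] M) x) hx n

theorem map_zpow_apply_of_semiconj {f : M →ₗ[R] N} {e : M ≃ₗ[R] M} {e' : N ≃ₗ[R] N}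
    (h : ∀ x, f (e x) = e' (f x)) (n : ℤ) (x : M) : f ((e ^ n) x) = (e' ^ n) (f x) := by
  have h_inv : ∀ x, f (e⁻¹ x) = e'⁻¹ (f x) := fun x => e'.injective <| by
    rw [← h, ← mul_apply, ← mul_apply, mul_inv_cancel, mul_inv_cancel]
    rfl
  induction n using Int.induction_on generalizing x with
  | zero => rfl
  | succ i ih => rw [zpow_add_one, zpow_add_one, mul_apply, mul_apply, ih, h]
  | pred i ih => rw [zpow_sub_one, zpow_sub_one, mul_apply, mul_apply, ih, h_inv]

end LinearEquiv

namespace HomAlgebraStr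

variable {K A : Type*} [Field K] [AddCommGroup A] [Module K A] (S : HomAlgebraStr K A)

theorem zpow_str_one (n : ℤ) : (S.str ^ n) S.one = S.one :=
  LinearEquiv.zpow_apply_eq_self S.str_one n

theorem mul_zpow_str (n : ℤ) (x y : A) :
    S.mul ((S.str ^ n) x) ((S.str ^ n) y) = (S.str ^ n) (S.mul x y) := by
  have h : ∀ t, TensorProduct.lift S.mul (TensorProduct.congr S.str S.str t)
      = S.str (TensorProduct.lift S.mul t) := fun t => by
    induction t using TensorProduct.induction_on with
    | zero => simp
    | tmul x y => simp [S.str_mul]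
    | add t u ht hu => simp only [map_add, ht, hu]
  simpa using LinearEquiv.map_zpow_apply_of_semiconj h n (x ⊗ₜ[K] y)

end HomAlgebraStr

namespace HomBialgebraStr

variable {K H : Type*} [Field K] [AddCommGroup H] [Module K H] (HB : HomBialgebraStr K H)

theorem comul_zpow_str (n : ℤ) (x : H) :
    HB.comul ((HB.str ^ n) x)
      = TensorProduct.map (HB.str ^ n).toLinearMap (HB.str ^ n).toLinearMap (HB.comul x) := by
  rw [LinearEquiv.map_zpow_apply_of_semiconj (e' := TensorProduct.congr HB.str HB.str)
    HB.comul_str, TensorProduct.congr_zpow]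
  rfl

theorem counit_zpow_str (n : ℤ) (x : H) : HB.counit ((HB.str ^ n) x) = HB.counit x := by
  simpa [← LinearEquiv.one_eq_refl] using LinearEquiv.map_zpow_apply_of_semiconj
    (e' := LinearEquiv.refl K K) HB.counit_str n x

end HomBialgebraStr

section SigmaTensor

variable {K H A : Type*} [Field K] [AddCommGroup H] [Module K H] [AddCommGroup A] [Module K A]
variable (HB : HomBialgebraStr K H) (AA : HomAlgebraStr K A) (σ : H →ₗ[K] H →ₗ[K] A)

def comulPair (h g : H) : (H ⊗[K] H) ⊗[K] (H ⊗[K] H) :=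
  tensorTensorTensorComm K H H H H (HB.comul h ⊗ₜ[K] HB.comul g)

theorem comulPair_zpow_str (i j : ℤ) (h g : H) :
    comulPair HB ((HB.str ^ i) h) ((HB.str ^ j) g)
      = map (map (HB.str ^ i).toLinearMap (HB.str ^ j).toLinearMap)
          (map (HB.str ^ i).toLinearMap (HB.str ^ j).toLinearMap) (comulPair HB h g) := by
  rw [comulPair, comulPair, HB.comul_zpow_str, HB.comul_zpow_str, ← map_tmul]
  exact LinearMap.congr_fun (tensorTensorTensorComm_comp_map K _ _ _ _) _

/-- Evaluated at `comulPair HB h g`, this is `Σ β^j σ(α^n h₁, α^n g₁) ⊗ α^c(h₂g₂)`. -/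
def sigmaTensor (n j c : ℤ) : (H ⊗[K] H) ⊗[K] (H ⊗[K] H) →ₗ[K] A ⊗[K] H :=
  map ((AA.str ^ j).toLinearMap ∘ₗ lift σ ∘ₗ
      map (HB.str ^ n).toLinearMap (HB.str ^ n).toLinearMap)
    ((HB.str ^ c).toLinearMap ∘ₗ lift HB.mul)

@[simp]
theorem sigmaTensor_tmul (n j c : ℤ) (x y u v : H) :
    sigmaTensor HB AA σ n j c ((x ⊗ₜ y) ⊗ₜ (u ⊗ₜ v))
      = (AA.str ^ j) (σ ((HB.str ^ n) x) ((HB.str ^ n) y)) ⊗ₜ (HB.str ^ c) (HB.mul u v) :=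
  rfl

theorem map_sigmaTensor (d e n j c : ℤ) (t : (H ⊗[K] H) ⊗[K] (H ⊗[K] H)) :
    map (AA.str ^ d).toLinearMap (HB.str ^ e).toLinearMap (sigmaTensor HB AA σ n j c t)
      = sigmaTensor HB AA σ n (d + j) (e + c) t :=
  LinearMap.congr_fun (f := map _ _ ∘ₗ sigmaTensor HB AA σ n j c)
    (ext_fourfold' fun x y u v => by simp [LinearEquiv.zpow_zpow_apply]) t

theorem sigmaTensor_comulPair_zpow_str (n j c e : ℤ) (h g : H) :
    sigmaTensor HB AA σ n j c (comulPair HB ((HB.str ^ e) h) ((HB.str ^ e) g))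
      = sigmaTensor HB AA σ (n + e) j (c + e) (comulPair HB h g) := by
  rw [comulPair_zpow_str]
  refine LinearMap.congr_fun (f := sigmaTensor HB AA σ n j c ∘ₗ map _ _)
    (ext_fourfold' fun x y u v => ?_) _
  simp [LinearEquiv.zpow_zpow_apply, HB.mul_zpow_str]

end SigmaTensor

namespace IsRadfordBiproduct

variable {K H A : Type*} [Field K] [AddCommGroup H] [Module K H] [AddCommGroup A] [Module K A]
variable {HB : HomBialgebraStr K H} {AA : HomAlgebraStr K A} {AC : HomCoalgebraStr K A}
  {act : H →ₗ[K] A →ₗ[K] A} {coact : A →ₗ[K] H ⊗[K] A} {σ : H →ₗ[K] H →ₗ[K] A} {m k : ℤ}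
  {B : HomBialgebraStr K (A ⊗[K] H)}

theorem str_apply (hB : IsRadfordBiproduct HB AA AC act coact σ m k B) (x : A ⊗[K] H) :
    B.str x = map AA.str.toLinearMap HB.str.toLinearMap x := by
  rw [hB.str_def]
  rfl

theorem tmul_mul_one_tmul (hB : IsRadfordBiproduct HB AA AC act coact σ m k B)
    (hact : ∀ h : H, act h AA.one = HB.counit h • AA.one) (a : A) (h g : H) :
    B.mul (a ⊗ₜ h) (AA.one ⊗ₜ g)
      = map (AA.mul a) LinearMap.id (sigmaTensor HB AA σ k 1 1 (comulPair HB h g)) := by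
  rw [hB.mul_def, cpMulElem, ← comulPair, ← LinearMap.comp_apply, ← LinearMap.comp_apply]
  refine LinearMap.congr_fun (ext_fourfold' fun x y u v => ?_) _
  simp only [LinearMap.comp_apply, map_tmul, sigmaTensor_tmul, LinearMap.id_apply]
  congr 2
  have hx : (HB.str ^ k) x
      = (HB.str ^ (k + 1)) (TensorProduct.lid K H (map HB.counit LinearMap.id (HB.comul x))) := by
    rw [HB.counit_comul_left, LinearEquiv.zpow_symm_apply, add_sub_cancel_right]
  rw [hx, AA.zpow_str_one, zpow_one]
  generalize HB.comul x = w
  induction w using TensorProduct.induction_on with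
  | zero => simp
  | tmul w₁ w₂ => simp [hact, HB.counit_zpow_str, AA.one_mul]
  | add w w' hw hw' => simp only [add_tmul, map_add, LinearMap.add_apply, hw, hw']

theorem one_tmul_mul_one_tmul (hB : IsRadfordBiproduct HB AA AC act coact σ m k B)
    (hact : ∀ h : H, act h AA.one = HB.counit h • AA.one) (h g : H) :
    B.mul (AA.one ⊗ₜ h) (AA.one ⊗ₜ g) = sigmaTensor HB AA σ k 2 1 (comulPair HB h g) := by
  have hβ : AA.mul AA.one = (AA.str ^ (1 : ℤ)).toLinearMap := LinearMap.ext fun a => by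
    rw [AA.one_mul, zpow_one]
    rfl
  rw [hB.tmul_mul_one_tmul hact, hβ, ← LinearEquiv.refl_toLinearMap, ← LinearEquiv.one_eq_refl,
    ← zpow_zero HB.str, map_sigmaTensor]
  rfl

theorem tmul_one_mul_one_tmul (hB : IsRadfordBiproduct HB AA AC act coact σ m k B)
    (hact : ∀ h : H, act h AA.one = HB.counit h • AA.one) (s : A) (w : H) :
    B.mul (s ⊗ₜ HB.one) (AA.one ⊗ₜ w) = AA.str s ⊗ₜ HB.str w := by
  have h_two : sigmaTensor HB AA σ k 2 1 (comulPair HB HB.one w) = AA.one ⊗ₜ HB.str w := by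
    rw [← hB.one_tmul_mul_one_tmul hact, ← hB.one_def, B.one_mul, hB.str_apply, map_tmul]
    simp [AA.str_one]
  have h_one : sigmaTensor HB AA σ k 1 1 (comulPair HB HB.one w) = AA.one ⊗ₜ HB.str w := by
    have := congrArg (map (AA.str ^ (-1 : ℤ)).toLinearMap (HB.str ^ (0 : ℤ)).toLinearMap) h_two
    rwa [map_sigmaTensor, map_tmul, LinearEquiv.coe_coe, AA.zpow_str_one, zpow_zero] at this
  rw [hB.tmul_mul_one_tmul hact, h_one, map_tmul, AA.mul_one, LinearMap.id_apply]

/-- Multiplicativity of `β ⊗ α` on `(1 ♯ h)(1 ♯ g)` moves one power of the structure maps from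
the value of `σ` into its arguments. -/
theorem sigmaTensor_comulPair_add_one (hB : IsRadfordBiproduct HB AA AC act coact σ m k B)
    (hact : ∀ h : H, act h AA.one = HB.counit h • AA.one) (n j c : ℤ) (h g : H) :
    sigmaTensor HB AA σ n (j + 1) c (comulPair HB h g)
      = sigmaTensor HB AA σ (n + 1) j c (comulPair HB h g) := by
  have shift_at_k : ∀ h g : H, sigmaTensor HB AA σ k 3 2 (comulPair HB h g)
      = sigmaTensor HB AA σ (k + 1) 2 2 (comulPair HB h g) := fun h g => by
    have hstr := B.str_mul (AA.one ⊗ₜ h) (AA.one ⊗ₜ g)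
    simp only [hB.str_apply, map_tmul, LinearEquiv.coe_coe, AA.str_one,
      hB.one_tmul_mul_one_tmul hact] at hstr
    have h_lhs := map_sigmaTensor HB AA σ 1 1 k 2 1 (comulPair HB h g)
    have h_rhs := sigmaTensor_comulPair_zpow_str HB AA σ k 2 1 1 h g
    simp only [zpow_one] at h_lhs h_rhs
    rw [h_lhs, h_rhs] at hstr
    norm_num at hstr
    exact hstr
  have h_shifted := congrArg
    (map (AA.str ^ (j - 2)).toLinearMap (HB.str ^ (c - 2 - (n - k))).toLinearMap)
    (shift_at_k ((HB.str ^ (n - k)) h) ((HB.str ^ (n - k)) g))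
  rw [sigmaTensor_comulPair_zpow_str, sigmaTensor_comulPair_zpow_str, map_sigmaTensor,
    map_sigmaTensor] at h_shifted
  convert h_shifted using 3 <;> ring

theorem str_philElem (hB : IsRadfordBiproduct HB AA AC act coact σ m k B) (l : H) (a : A)
    (h : H) :
    B.str (philElem HB AA act σ m k l a h)
      = B.mul (AA.one ⊗ₜ (HB.str ^ (1 - m)) l) (AA.str a ⊗ₜ HB.str h) := by
  rw [show HB.str h = (HB.str ^ (1 : ℤ)) h by rw [zpow_one], hB.str_apply, hB.mul_def, cpMulElem,
    philElem, ← comulPair, ← comulPair, comulPair_zpow_str]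
  simp only [← LinearMap.comp_apply]
  refine LinearMap.congr_fun (ext_fourfold' fun x y u v => ?_) _
  simp only [LinearMap.comp_apply, map_tmul, LinearEquiv.coe_coe, LinearMap.id_apply, lift.tmul,
    HB.comul_zpow_str, AA.one_mul, zpow_one]
  congr 1
  generalize HB.comul x = w
  induction w using TensorProduct.induction_on with
  | zero => simp
  | tmul w₁ w₂ =>
    simp only [map_tmul, LinearEquiv.coe_coe, TensorProduct.assoc_tmul, LinearMap.comp_apply,
      lift.tmul, LinearMap.flip_apply, LinearEquiv.zpow_zpow_apply, LinearEquiv.zpow_apply_apply]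
    rw [show m + (1 - m) = 1 by ring, show k + 1 + (1 - m) = k + 2 - m by ring, zpow_one]
    norm_num
  | add w w' hw hw' => simp only [add_tmul, map_add, hw, hw']

theorem philElem_eq_mul (hB : IsRadfordBiproduct HB AA AC act coact σ m k B) (l : H) (a : A)
    (h : H) : philElem HB AA act σ m k l a h = B.mul (AA.one ⊗ₜ (HB.str ^ (-m)) l) (a ⊗ₜ h) := by
  apply B.str.injective
  rw [B.str_mul, hB.str_philElem, hB.str_apply, hB.str_apply, map_tmul, map_tmul,
    LinearEquiv.coe_coe, LinearEquiv.coe_coe, AA.str_one, LinearEquiv.apply_zpow_apply,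
    ← sub_eq_add_neg]

theorem one_tmul_mul_one_tmul_mul (hB : IsRadfordBiproduct HB AA AC act coact σ m k B)
    (hact : ∀ h : H, act h AA.one = HB.counit h • AA.one) (g l : H) (x : A ⊗[K] H) :
    B.mul (AA.one ⊗ₜ (HB.str ^ (-m)) (HB.str g)) (B.mul (AA.one ⊗ₜ (HB.str ^ (-m)) l) x)
      = B.mul (sigmaTensor HB AA σ (k + 1 - m) 1 (1 - m) (comulPair HB g l)) (B.str x) := by
  have hg : AA.one ⊗ₜ (HB.str ^ (-m)) (HB.str g)
      = B.str (AA.one ⊗ₜ[K] (HB.str ^ (-m)) g) := by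
    rw [hB.str_apply, map_tmul, LinearEquiv.coe_coe, LinearEquiv.coe_coe, AA.str_one,
      LinearEquiv.zpow_apply_apply, LinearEquiv.apply_zpow_apply, add_comm]
  rw [hg, B.hom_assoc, hB.one_tmul_mul_one_tmul hact, sigmaTensor_comulPair_zpow_str,
    show (2 : ℤ) = 1 + 1 from rfl, hB.sigmaTensor_comulPair_add_one hact]
  ring_nf

end IsRadfordBiproduct

theorem biproduct_left_sigma_module_general
    {K H A : Type*} [Field K] [AddCommGroup H] [Module K H] [AddCommGroup A] [Module K A]
    (HB : HomBialgebraStr K H) (AA : HomAlgebraStr K A) (AC : HomCoalgebraStr K A)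
    (act : H →ₗ[K] A →ₗ[K] A) (hact : IsWeakModuleAlgebra HB AA act)
    (coact : A →ₗ[K] H ⊗[K] A)
    (σ : H →ₗ[K] H →ₗ[K] A) (m k : ℤ)
    (B : HomBialgebraStr K (A ⊗[K] H))
    (hB : IsRadfordBiproduct HB AA AC act coact σ m k B)
    (φl : H →ₗ[K] (A ⊗[K] H) →ₗ[K] (A ⊗[K] H))
    (hφl : ∀ (l : H) (a : A) (h : H), φl l (a ⊗ₜ[K] h) = philElem HB AA act σ m k l a h)
    (σbar : H →ₗ[K] H →ₗ[K] A ⊗[K] H)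
    (hσbar : ∀ h l : H,
      σbar h l = σ ((HB.str ^ (k+1-m)) h) ((HB.str ^ (k+1-m)) l) ⊗ₜ[K] HB.one) :
    IsLeftSigmaHomModule HB B.mul
      (TensorProduct.map AA.str.toLinearMap HB.str.toLinearMap) σbar φl := by
  have hφ : ∀ l x, φl l x = B.mul (AA.one ⊗ₜ (HB.str ^ (-m)) l) x := fun l x =>
    LinearMap.congr_fun (TensorProduct.ext' fun a h => by rw [hφl, hB.philElem_eq_mul]) x
  refine ⟨fun g l x => ?_, fun x => ?_⟩
  · rw [hφ, hφ, hB.one_tmul_mul_one_tmul_mul hact.act_one, ← LinearMap.flip_apply (f := B.mul),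
      ← LinearMap.comp_apply, ← LinearMap.comp_apply (lift B.mul)]
    congr 1
    refine TensorProduct.ext_fourfold' fun p q r s => ?_
    simp only [LinearMap.comp_apply, LinearMap.flip_apply, map_tmul, lift.tmul, sigmaTensor_tmul,
      hσbar, hφ, ← hB.str_apply, B.hom_assoc, hB.tmul_one_mul_one_tmul hact.act_one, zpow_one,
      LinearEquiv.apply_zpow_apply, ← sub_eq_add_neg]
  · rw [hφ, HB.zpow_str_one, ← hB.one_def, B.one_mul, hB.str_apply]

/-- Lemma 4.7: `(A ♯_σ^× H, β ⊗ α, φ^l)` is a left `(H, α, σ̄)`-Hom module. -/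
theorem biproduct_left_sigma_module
    {K H A : Type*} [Field K] [AddCommGroup H] [Module K H] [AddCommGroup A] [Module K A]
    (HB : HomBialgebraStr K H) (AA : HomAlgebraStr K A) (AC : HomCoalgebraStr K A)
    (act : H →ₗ[K] A →ₗ[K] A) (hact : IsWeakModuleAlgebra HB AA act)
    (coact : A →ₗ[K] H ⊗[K] A) (hcc : IsComoduleCoalgebra HB AC coact)
    (σ σinv : H →ₗ[K] H →ₗ[K] A)
    (hconv : IsConvInvPair HB AA σ σinv) (m k : ℤ)
    (B : HomBialgebraStr K (A ⊗[K] H))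
    (hB : IsRadfordBiproduct HB AA AC act coact σ m k B)
    (φl : H →ₗ[K] (A ⊗[K] H) →ₗ[K] (A ⊗[K] H))
    (hφl : ∀ (l : H) (a : A) (h : H), φl l (a ⊗ₜ[K] h) = philElem HB AA act σ m k l a h)
    (σbar : H →ₗ[K] H →ₗ[K] A ⊗[K] H)
    (hσbar : ∀ h l : H,
      σbar h l = σ ((HB.str ^ (k+1-m)) h) ((HB.str ^ (k+1-m)) l) ⊗ₜ[K] HB.one) :
    IsLeftSigmaHomModule HB B.mul
      (TensorProduct.map AA.str.toLinearMap HB.str.toLinearMap) σbar φl :=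
  biproduct_left_sigma_module_general HB AA AC act hact coact σ m k B hB φl hφl σbar hσbar
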